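/- arXiv:1707.03063 — 4 statements merged into one kernel-verified Lean document; each statement's English description precedes it below -/
import Mathlib

section
/- Let H_1, …, H_{J-1} be p_j × m real matrices and H_c a p_c × m real matrix, and form the (p_1 + ⋯ + p_{J-1} + p_c) × m(J−1) block matrix H whose first block rows form the block-diagonal matrix with blocks H_1, …, H_{J-1} and whose last block row is (H_c, H_c, …, H_c). Then rank(H) = rank(H_1) + ⋯ + rank(H_{J-1}) + rank(H_c) − dim( R(H_c) ∩ (⋂_{j=1}^{J-1} R(H_j)) ), where R(M) denotes the row space of M. -/
/-!
Currying identifies `ℝ^(Σ_j m)` with `(ℝ^m)^K`, and under it the row space of the block matrix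
becomes `P ⊔ Δ(R(H_c))`, where `P = ∏_j R(H_j)` and `Δ : ℝ^m → (ℝ^m)^K` is the diagonal map.
Since `P ⊓ Δ(R(H_c)) = Δ(R(H_c) ∩ ⋂_j R(H_j))` and `Δ` is injective once `K > 0`, Grassmann's
formula `dim (P ⊔ Q) + dim (P ⊓ Q) = dim P + dim Q` gives the rank identity.
-/

open Matrix Submodule Module

namespace Submodule

def piUnivEquiv {R ι : Type*} {φ : ι → Type*} [Semiring R] [∀ i, AddCommMonoid (φ i)]
    [∀ i, Module R (φ i)] (p : ∀ i, Submodule R (φ i)) :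
    (∀ i, p i) ≃ₗ[R] pi Set.univ p where
  toFun f := ⟨fun i => f i, fun i _ => (f i).2⟩
  map_add' _ _ := rfl
  map_smul' _ _ := rfl
  invFun x := fun i => ⟨x.1 i, x.2 i trivial⟩
  left_inv _ := rfl
  right_inv _ := rfl

theorem comap_diag_pi_univ {R ι V : Type*} [Semiring R] [AddCommMonoid V] [Module R V]
    (p : ι → Submodule R V) :
    comap (LinearMap.pi fun _ : ι => LinearMap.id) (pi Set.univ p) = ⨅ i, p i := by
  ext x
  simp

variable {K ι : Type*} [DivisionRing K] [Fintype ι]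

theorem finrank_pi_univ {φ : ι → Type*} [∀ i, AddCommGroup (φ i)] [∀ i, Module K (φ i)]
    [∀ i, FiniteDimensional K (φ i)] (p : ∀ i, Submodule K (φ i)) :
    finrank K (pi Set.univ p) = ∑ i, finrank K (p i) := by
  rw [← (piUnivEquiv p).finrank_eq, finrank_pi_fintype]

theorem finrank_pi_univ_sup_map_diag_add_finrank_inf {V : Type*} [AddCommGroup V] [Module K V]
    [FiniteDimensional K V] (p : ι → Submodule K V) (q : Submodule K V) :
    finrank K ↥(pi Set.univ p ⊔ q.map (LinearMap.pi fun _ : ι => LinearMap.id))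
      + finrank K ↥(q ⊓ ⨅ i, p i) = ∑ i, finrank K (p i) + finrank K q := by
  rcases isEmpty_or_nonempty ι with _ | ⟨⟨i₀⟩⟩
  · rw [iInf_of_empty, inf_top_eq]
    simp [finrank_zero_of_subsingleton]
  set Δ : V →ₗ[K] ι → V := LinearMap.pi fun _ => LinearMap.id
  have hΔ : Function.Injective Δ := fun x y h => congrFun h i₀
  have hinf : pi Set.univ p ⊓ q.map Δ = (q ⊓ ⨅ i, p i).map Δ := by
    rw [inf_comm, map_inf_eq_map_inf_comap, comap_diag_pi_univ]
  rw [(equivMapOfInjective Δ hΔ _).finrank_eq, ← hinf, finrank_sup_add_finrank_inf_eq,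
    finrank_pi_univ, ← (equivMapOfInjective Δ hΔ q).finrank_eq]

end Submodule

namespace Matrix

theorem rank_fromRows {R m₁ m₂ n : Type*} [Field R] [Finite m₁] [Finite m₂] [Fintype n]
    (A : Matrix m₁ n R) (B : Matrix m₂ n R) :
    (fromRows A B).rank = finrank R ↥(span R (Set.range A.row) ⊔ span R (Set.range B.row)) := by
  rw [rank_eq_finrank_span_row, ← span_union]
  exact congrArg (fun s => finrank R (span R s)) (Set.Sum.elim_range A B)

variable {R ι : Type*} [Semiring R]

theorem piCurry_blockDiagonal'_row [DecidableEq ι] {m n : ι → Type*}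
    (H : ∀ i, Matrix (m i) (n i) R) (i : ι) (k : m i) :
    LinearEquiv.piCurry R (fun i (_ : n i) => R) ((blockDiagonal' H).row ⟨i, k⟩)
      = Pi.single i ((H i).row k) := by
  ext j c
  by_cases hij : j = i
  · subst hij
    simp [Sigma.curry, row]
  · simp [Sigma.curry, blockDiagonal'_apply, hij, Ne.symm hij]

theorem map_piCurry_span_range_blockDiagonal' [DecidableEq ι] [Finite ι] {m n : ι → Type*}
    (H : ∀ i, Matrix (m i) (n i) R) :
    (span R (Set.range (blockDiagonal' H).row)).map
        (LinearEquiv.piCurry R fun i (_ : n i) => R).toLinearMap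
      = pi Set.univ fun i => span R (Set.range (H i).row) := by
  have himage : LinearEquiv.piCurry R (fun i (_ : n i) => R) '' Set.range (blockDiagonal' H).row
      = ⋃ i, LinearMap.single R (fun i => n i → R) i '' Set.range (H i).row := by
    ext x
    simp only [Set.mem_image, Set.mem_range, Set.mem_iUnion]
    constructor
    · rintro ⟨-, ⟨⟨i, k⟩, rfl⟩, rfl⟩
      exact ⟨i, _, ⟨k, rfl⟩, (piCurry_blockDiagonal'_row H i k).symm⟩
    · rintro ⟨i, -, ⟨k, rfl⟩, rfl⟩
      exact ⟨_, ⟨⟨i, k⟩, rfl⟩, piCurry_blockDiagonal'_row H i k⟩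
  rw [map_span, LinearEquiv.coe_coe, himage, span_iUnion]
  simp_rw [span_image]
  exact iSup_map_single

theorem map_piCurry_span_range_replicate {m n : Type*} (A : Matrix m n R) :
    (span R (Set.range (of fun r (c : Σ _ : ι, n) => A r c.2).row)).map
        (LinearEquiv.piCurry R fun (_ : ι) (_ : n) => R).toLinearMap
      = (span R (Set.range A.row)).map (LinearMap.pi fun _ : ι => LinearMap.id) := by
  simp only [map_span, ← Set.range_comp]
  rfl

end Matrix

theorem ppo_block_matrix_rank
    (K m pc : ℕ) (p : Fin K → ℕ)
    (H : ∀ j : Fin K, Matrix (Fin (p j)) (Fin m) ℝ)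
    (Hc : Matrix (Fin pc) (Fin m) ℝ) :
    (Matrix.fromRows
        (Matrix.blockDiagonal' (fun j => H j) :
          Matrix (Σ j : Fin K, Fin (p j)) (Σ _ : Fin K, Fin m) ℝ)
        (Matrix.of fun r (c : Σ _ : Fin K, Fin m) => Hc r c.2)).rank
      + Module.finrank ℝ
          ↥(Submodule.span ℝ (Set.range fun i => Hc i) ⊓
            ⨅ j : Fin K, Submodule.span ℝ (Set.range fun i => H j i))
      = (∑ j, (H j).rank) + Hc.rank := by
  rw [rank_fromRows, ← LinearEquiv.finrank_map_eq (LinearEquiv.piCurry ℝ fun _ _ => ℝ),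
    Submodule.map_sup, map_piCurry_span_range_blockDiagonal', map_piCurry_span_range_replicate]
  simp only [rank_eq_finrank_span_row]
  exact finrank_pi_univ_sup_map_diag_add_finrank_inf _ _
end

section
/- Let M be a k×k block matrix whose blocks A_{ij} are n×n real matrices that commute pairwise (A_{ij}A_{lm} = A_{lm}A_{ij} for all indices). Then det(M) = det( ∑_{σ ∈ S_k} sgn(σ) A_{1σ(1)} A_{2σ(2)} ⋯ A_{kσ(k)} ), where the sum ranges over all permutations σ of {1, …, k}. -/
/-!
The blocks commute pairwise, so they generate a commutative subring `S` of the matrix ring and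
the block matrix is a `k × k` matrix over `S`. Silvester's theorem (`Matrix.det_det`) computes
its determinant by first taking the determinant over `S` and then the determinant over the base
ring; the Leibniz expansion of the determinant over `S`, read in the ambient matrix ring, is the
signed sum of ordered block products.
-/

open Matrix

theorem Matrix.det_eq_sum_sign_smul_ofFn_prod {R : Type*} [CommRing R] {k : ℕ}
    (M : Matrix (Fin k) (Fin k) R) :
    M.det = ∑ σ : Equiv.Perm (Fin k),
      (Equiv.Perm.sign σ : ℤ) • (List.ofFn fun i => M i (σ i)).prod := by
  rw [← det_transpose, det_apply]
  simp [List.prod_ofFn, Units.smul_def]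

theorem RingHom.map_det_eq_sum_sign_smul_ofFn_prod {S T : Type*} [CommRing S] [Ring T]
    (f : S →+* T) {k : ℕ} (M : Matrix (Fin k) (Fin k) S) :
    f M.det = ∑ σ : Equiv.Perm (Fin k),
      (Equiv.Perm.sign σ : ℤ) • (List.ofFn fun i => f (M i (σ i))).prod := by
  simp only [M.det_eq_sum_sign_smul_ofFn_prod, map_sum, map_zsmul, map_list_prod,
    List.map_ofFn, Function.comp_def]

open scoped IsMulCommutative in
theorem Matrix.det_comp_of_commute {R m : Type*} [CommRing R] [Fintype m] [DecidableEq m]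
    {k : ℕ} (A : Matrix (Fin k) (Fin k) (Matrix m m R))
    (hcomm : ∀ i j i' j', Commute (A i j) (A i' j')) :
    (comp _ _ _ _ R A).det = (∑ σ : Equiv.Perm (Fin k),
      (Equiv.Perm.sign σ : ℤ) • (List.ofFn fun i => A i (σ i)).prod).det := by
  let blocks := Set.range fun p : Fin k × Fin k => A p.1 p.2
  let S := Subring.closure blocks
  have : IsMulCommutative S := Subring.isMulCommutative_closure <| by
    rintro _ ⟨⟨i, j⟩, rfl⟩ _ ⟨⟨i', j'⟩, rfl⟩
    exact hcomm i j i' j'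
  let B : Matrix (Fin k) (Fin k) S := fun i j => ⟨A i j, Subring.subset_closure ⟨(i, j), rfl⟩⟩
  have silvester := det_det B S.subtype
  rw [S.subtype.map_det_eq_sum_sign_smul_ofFn_prod] at silvester
  exact silvester.symm

theorem det_of_commuting_block_matrix
    (k n : ℕ) (A : Fin k → Fin k → Matrix (Fin n) (Fin n) ℝ)
    (hcomm : ∀ i j l m', A i j * A l m' = A l m' * A i j) :
    (Matrix.of fun p q : Fin k × Fin n => A p.1 q.1 p.2 q.2).det
      = (∑ σ : Equiv.Perm (Fin k),
          ((Equiv.Perm.sign σ : ℤ) • (List.ofFn fun i => A i (σ i)).prod)).det :=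
  Matrix.det_comp_of_commute (Matrix.of A) hcomm
end

section
/- Fix constants 0 < c_1 ≤ c_2 ≤ c_3 and consider maximizing f(w_1, w_2, w_3) = w_1 w_2 w_3 (c_1 w_2 w_3 + c_2 w_1 w_3 + c_3 w_1 w_2) over the simplex {w_i ≥ 0, w_1 + w_2 + w_3 = 1}. Then the maximizer is the uniform allocation w_1 = w_2 = w_3 = 1/3 if and only if c_1 = c_2 = c_3. -/
/-!
At the uniform allocation, moving weight from `w₁` to `w₂` changes `f` at first order by
`(c₂ - c₁) t / 81`, so uniform optimality forces `c₂ ≤ c₁`. Since `f` is invariant under rotating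
the coefficients together with the weights, the same argument gives `c₃ ≤ c₂` and `c₁ ≤ c₃`.
Conversely, for `c₁ = c₂ = c₃ = c ≥ 0` we have `f = c · e₃ · e₂` in the elementary symmetric
polynomials, and on the simplex `e₃ ≤ 1/27` and `e₂ ≤ 1/3`, both with equality at the centre.
-/

open Filter Topology

def fisherDet (c₁ c₂ c₃ w₁ w₂ w₃ : ℝ) : ℝ :=
  w₁ * w₂ * w₃ * (c₁ * w₂ * w₃ + c₂ * w₁ * w₃ + c₃ * w₁ * w₂)

def IsUniformMaximizer (c₁ c₂ c₃ : ℝ) : Prop :=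
  ∀ w₁ w₂ w₃ : ℝ, 0 ≤ w₁ → 0 ≤ w₂ → 0 ≤ w₃ → w₁ + w₂ + w₃ = 1 →
    fisherDet c₁ c₂ c₃ w₁ w₂ w₃ ≤ fisherDet c₁ c₂ c₃ (1/3) (1/3) (1/3)

theorem fisherDet_rotate (c₁ c₂ c₃ w₁ w₂ w₃ : ℝ) :
    fisherDet c₂ c₃ c₁ w₂ w₃ w₁ = fisherDet c₁ c₂ c₃ w₁ w₂ w₃ := by
  unfold fisherDet; ring

theorem fisherDet_self (c w₁ w₂ w₃ : ℝ) :
    fisherDet c c c w₁ w₂ w₃ = c * (w₁ * w₂ * w₃ * (w₂ * w₃ + w₁ * w₃ + w₁ * w₂)) := by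
  unfold fisherDet; ring

theorem fisherDet_transfer_sub_uniform (c₁ c₂ c₃ t : ℝ) :
    fisherDet c₁ c₂ c₃ (1/3 + t) (1/3 - t) (1/3) - fisherDet c₁ c₂ c₃ (1/3) (1/3) (1/3) =
      t * ((c₂ - c₁) / 81 - (c₁ + c₂ + 2 * c₃) / 27 * t - (c₂ - c₁) / 9 * t ^ 2 + c₃ / 3 * t ^ 3) := by
  unfold fisherDet; ring

theorem eventually_fisherDet_uniform_lt_transfer {c₁ c₂ : ℝ} (h : c₁ < c₂) (c₃ : ℝ) :
    ∀ᶠ t in 𝓝[>] 0,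
      fisherDet c₁ c₂ c₃ (1/3) (1/3) (1/3) < fisherDet c₁ c₂ c₃ (1/3 + t) (1/3 - t) (1/3) := by
  set g : ℝ → ℝ := fun t ↦
    (c₂ - c₁) / 81 - (c₁ + c₂ + 2 * c₃) / 27 * t - (c₂ - c₁) / 9 * t ^ 2 + c₃ / 3 * t ^ 3
  have hg₀ : 0 < g 0 := by simp only [g]; linarith
  have hg : ∀ᶠ t in 𝓝 0, 0 < g t :=
    (by fun_prop : Continuous g).continuousAt.eventually_const_lt hg₀
  filter_upwards [nhdsWithin_le_nhds hg, self_mem_nhdsWithin] with t hgt (ht : 0 < t)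
  rw [← sub_pos, fisherDet_transfer_sub_uniform]
  exact mul_pos ht hgt

theorem IsUniformMaximizer.rotate {c₁ c₂ c₃ : ℝ} (h : IsUniformMaximizer c₁ c₂ c₃) :
    IsUniformMaximizer c₂ c₃ c₁ := by
  intro w₂ w₃ w₁ h₂ h₃ h₁ hsum
  rw [fisherDet_rotate c₁ c₂ c₃ w₁, fisherDet_rotate c₁ c₂ c₃ (1/3)]
  exact h w₁ w₂ w₃ h₁ h₂ h₃ (by linarith)

theorem IsUniformMaximizer.le {c₁ c₂ c₃ : ℝ} (h : IsUniformMaximizer c₁ c₂ c₃) : c₂ ≤ c₁ := by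
  by_contra! hlt
  obtain ⟨t, hgt, ht⟩ := ((eventually_fisherDet_uniform_lt_transfer hlt c₃).and
    (Ioc_mem_nhdsGT (by norm_num : (0 : ℝ) < 1/3))).exists
  exact hgt.not_ge (h _ _ _ (by linarith [ht.1]) (by linarith [ht.2]) (by norm_num) (by ring))

theorem IsUniformMaximizer.eq {c₁ c₂ c₃ : ℝ} (h : IsUniformMaximizer c₁ c₂ c₃) :
    c₁ = c₂ ∧ c₂ = c₃ := by
  have h₂₁ := h.le
  have h₃₂ := h.rotate.le
  have h₁₃ := h.rotate.rotate.le
  constructor <;> linarith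

theorem pairwise_mul_sum_le_of_add_add_eq_one {w₁ w₂ w₃ : ℝ} (hsum : w₁ + w₂ + w₃ = 1) :
    w₂ * w₃ + w₁ * w₃ + w₁ * w₂ ≤ 1/3 := by
  nlinarith [sq_nonneg (w₁ - w₂), sq_nonneg (w₂ - w₃), sq_nonneg (w₁ - w₃)]

theorem mul_mul_le_of_add_add_eq_one {w₁ w₂ w₃ : ℝ} (h₁ : 0 ≤ w₁) (h₂ : 0 ≤ w₂) (h₃ : 0 ≤ w₃)
    (hsum : w₁ + w₂ + w₃ = 1) : w₁ * w₂ * w₃ ≤ 1/27 := by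
  have hpair := pairwise_mul_sum_le_of_add_add_eq_one hsum
  nlinarith [mul_nonneg h₃ (sq_nonneg (w₁ - w₂)), mul_nonneg h₁ (sq_nonneg (w₂ - w₃)),
    mul_nonneg h₂ (sq_nonneg (w₁ - w₃)), sq_nonneg (w₁ - w₂), sq_nonneg (w₂ - w₃),
    sq_nonneg (w₁ - w₃)]

theorem isUniformMaximizer_self {c : ℝ} (hc : 0 ≤ c) : IsUniformMaximizer c c c := by
  intro w₁ w₂ w₃ h₁ h₂ h₃ hsum
  rw [fisherDet_self, fisherDet_self]
  refine mul_le_mul_of_nonneg_left ?_ hc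
  calc w₁ * w₂ * w₃ * (w₂ * w₃ + w₁ * w₃ + w₁ * w₂)
      ≤ 1/27 * (1/3) := mul_le_mul (mul_mul_le_of_add_add_eq_one h₁ h₂ h₃ hsum)
        (pairwise_mul_sum_le_of_add_add_eq_one hsum) (by positivity) (by norm_num)
    _ = _ := by norm_num

theorem uniform_maximizer_iff_equal_coefficients_general
    (c₁ c₂ c₃ : ℝ) (h₁ : 0 < c₁) :
    (∀ w₁ w₂ w₃ : ℝ, 0 ≤ w₁ → 0 ≤ w₂ → 0 ≤ w₃ → w₁ + w₂ + w₃ = 1 →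
        w₁ * w₂ * w₃ * (c₁ * w₂ * w₃ + c₂ * w₁ * w₃ + c₃ * w₁ * w₂) ≤
          (1/3) * (1/3) * (1/3) *
            (c₁ * (1/3) * (1/3) + c₂ * (1/3) * (1/3) + c₃ * (1/3) * (1/3)))
      ↔ (c₁ = c₂ ∧ c₂ = c₃) := by
  change IsUniformMaximizer c₁ c₂ c₃ ↔ _
  refine ⟨IsUniformMaximizer.eq, ?_⟩
  rintro ⟨rfl, rfl⟩
  exact isUniformMaximizer_self h₁.le

theorem uniform_maximizer_iff_equal_coefficients
    (c₁ c₂ c₃ : ℝ) (h₁ : 0 < c₁) (h₁₂ : c₁ ≤ c₂) (h₂₃ : c₂ ≤ c₃) :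
    (∀ w₁ w₂ w₃ : ℝ, 0 ≤ w₁ → 0 ≤ w₂ → 0 ≤ w₃ → w₁ + w₂ + w₃ = 1 →
        w₁ * w₂ * w₃ * (c₁ * w₂ * w₃ + c₂ * w₁ * w₃ + c₃ * w₁ * w₂) ≤
          (1/3) * (1/3) * (1/3) *
            (c₁ * (1/3) * (1/3) + c₂ * (1/3) * (1/3) + c₃ * (1/3) * (1/3)))
      ↔ (c₁ = c₂ ∧ c₂ = c₃) :=
  uniform_maximizer_iff_equal_coefficients_general c₁ c₂ c₃ h₁
end

section
/- Fix constants 0 < c_1 = c_2 < c_3, set Δ = √(4c_1² − c_1 c_3 + c_3²) and D = −4c_1 + 3c_3 + 2Δ. Then the maximizer of f(w_1, w_2, w_3) = w_1 w_2 w_3 (c_1 w_2 w_3 + c_2 w_1 w_3 + c_3 w_1 w_2) over the simplex {w_i ≥ 0, ∑ w_i = 1} is w_1 = w_2 = (−2c_1 + c_3 + Δ)/D and w_3 = c_3/D, and it satisfies w_1 = w_2 > w_3 > 0. -/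
/-- Key 1D lemma: the quintic `φ(t) = t³(1-2t)(2c+(k-4c)t)` is maximized on `[0,1/2]`
at the critical point `s` satisfying `6c + 4(k-8c)s - 10(k-4c)s² = 0`, `1/3 ≤ s < 2/5`. -/
lemma phi_max (c k s t : ℝ) (hc : 0 < c) (hk : c < k)
    (hrel : 6*c + 4*(k-8*c)*s - 10*(k-4*c)*s^2 = 0)
    (hs1 : 1 ≤ 3*s) (hs2 : 5*s < 2) (ht0 : 0 ≤ t) (ht1 : 2*t ≤ 1) :
    t^3*(1-2*t)*(2*c + (k-4*c)*t) ≤ s^3*(1-2*s)*(2*c + (k-4*c)*s) := by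
  have hs0 : 0 < s := by linarith
  obtain ⟨a, ha⟩ : ∃ a : ℝ, a = k - 4*c := ⟨_, rfl⟩
  obtain ⟨E, hE⟩ : ∃ E : ℝ, E = 4*a*s - a + 4*c := ⟨_, rfl⟩
  rw [← ha]
  have hrela : 6*c + 4*(a-4*c)*s - 10*a*s^2 = 0 := by rw [ha]; linear_combination hrel
  have hid : (a*s + c) * (2 - 5*s) = c * (3*s - 1) := by linear_combination (1/2) * hrela
  have hac : 0 ≤ a*s + c := by
    nlinarith [hid, mul_nonneg hc.le (show (0:ℝ) ≤ 3*s - 1 by linarith)]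
  have hEpos : 0 ≤ E := by
    rcases le_or_gt a 0 with h | h
    · have h' : E = 4*(a*s + c) - a := by rw [hE]; ring
      linarith
    · have h1 : 0 ≤ a * (4*s - 1) := mul_nonneg h.le (by linarith)
      have h' : E = a*(4*s-1) + 4*c := by rw [hE]; ring
      linarith
  have hEt : 0 ≤ E*(2*s/3*t + s^2/3) := mul_nonneg hEpos (by positivity)
  have hq : 0 ≤ 2*a*t^3 + E*(t^2 + 2*s/3*t + s^2/3) := by
    rcases le_or_gt 0 a with h | h
    · have h1 : 0 ≤ 2*a*t^3 := by positivity
      have h2 : 0 ≤ E*t^2 := mul_nonneg hEpos (sq_nonneg t)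
      have hdist : 2*a*t^3 + E*(t^2 + 2*s/3*t + s^2/3)
          = 2*a*t^3 + E*t^2 + E*(2*s/3*t + s^2/3) := by ring
      linarith
    · have hneg : 0 ≤ -a*(1-2*t) := mul_nonneg (by linarith) (by linarith)
      have h1' : 0 ≤ a*(2*t-1)*t^2 := by nlinarith [hneg, sq_nonneg t]
      have haE : a + E = 4*(a*s+c) := by rw [hE]; ring
      have h2 : 0 ≤ (a+E)*t^2 := mul_nonneg (by linarith) (sq_nonneg t)
      have hdist : 2*a*t^3 + E*(t^2 + 2*s/3*t + s^2/3)
          = a*(2*t-1)*t^2 + (a+E)*t^2 + E*(2*s/3*t + s^2/3) := by ring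
      linarith
  have hiden : s^3*(1-2*s)*(2*c + a*s) - t^3*(1-2*t)*(2*c + a*t)
      = (t-s)^2 * (2*a*t^3 + E*(t^2 + 2*s/3*t + s^2/3)) := by
    linear_combination ((s^3 - t^3)/3) * hrela
      - ((t-s)^2*(t^2 + 2*s/3*t + s^2/3)) * hE
  nlinarith [mul_nonneg (sq_nonneg (t-s)) hq, hiden]

set_option maxHeartbeats 1000000 in
theorem maximizer_formula_when_c1_eq_c2_lt_c3
    (c₁ c₂ c₃ : ℝ) (h₁ : 0 < c₁) (h₁₂ : c₁ = c₂) (h₂₃ : c₂ < c₃) :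
    let Δ := Real.sqrt (4 * c₁ ^ 2 - c₁ * c₃ + c₃ ^ 2)
    let D := -4 * c₁ + 3 * c₃ + 2 * Δ
    let w₁ := (-2 * c₁ + c₃ + Δ) / D
    let w₃ := c₃ / D
    0 < w₃ ∧ w₃ < w₁ ∧ w₁ + w₁ + w₃ = 1 ∧
      ∀ v₁ v₂ v₃ : ℝ, 0 ≤ v₁ → 0 ≤ v₂ → 0 ≤ v₃ → v₁ + v₂ + v₃ = 1 →
        v₁ * v₂ * v₃ * (c₁ * v₂ * v₃ + c₂ * v₁ * v₃ + c₃ * v₁ * v₂) ≤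
          w₁ * w₁ * w₃ * (c₁ * w₁ * w₃ + c₂ * w₁ * w₃ + c₃ * w₁ * w₁) := by
  intro Δ D w₁ w₃
  have hΔdef : Δ = Real.sqrt (4 * c₁ ^ 2 - c₁ * c₃ + c₃ ^ 2) := rfl
  have hDdef : D = -4 * c₁ + 3 * c₃ + 2 * Δ := rfl
  have hw₁def : w₁ = (-2 * c₁ + c₃ + Δ) / D := rfl
  have hw₃def : w₃ = c₃ / D := rfl
  clear_value Δ D w₁ w₃
  subst h₁₂
  have hk : c₁ < c₃ := h₂₃
  have harg : (0:ℝ) < 4 * c₁ ^ 2 - c₁ * c₃ + c₃ ^ 2 := by nlinarith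
  have hΔ2 : Δ^2 = 4 * c₁ ^ 2 - c₁ * c₃ + c₃ ^ 2 := by
    rw [hΔdef]; exact Real.sq_sqrt harg.le
  have hΔpos : 0 < Δ := by rw [hΔdef]; exact Real.sqrt_pos.mpr harg
  have hΔ2c : 2*c₁ < Δ := by nlinarith [hΔ2, hΔpos]
  have hΔlt : Δ < 2*c₁ + c₃ := by nlinarith [hΔ2, hΔpos]
  have hD : 0 < D := by rw [hDdef]; linarith
  have hD' : D ≠ 0 := ne_of_gt hD
  have hw₃pos : 0 < w₃ := by rw [hw₃def]; exact div_pos (by linarith) hD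
  have hNum : c₃ < -2 * c₁ + c₃ + Δ := by linarith
  have hlt : w₃ < w₁ := by
    rw [hw₃def, hw₁def, div_lt_div_iff₀ hD hD]
    nlinarith [hD, hNum]
  have hsum : w₁ + w₁ + w₃ = 1 := by
    rw [hw₃def, hw₁def]
    field_simp
    rw [hDdef]; ring
  refine ⟨hw₃pos, hlt, hsum, ?_⟩
  intro v₁ v₂ v₃ hv₁ hv₂ hv₃ hvsum
  have hw1D : w₁ * D = -2 * c₁ + c₃ + Δ := by rw [hw₁def]; field_simp
  have hrelD : 6*c₁*D^2 + 4*(c₃-8*c₁)*(-2*c₁+c₃+Δ)*D - 10*(c₃-4*c₁)*(-2*c₁+c₃+Δ)^2 = 0 := by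
    rw [hDdef]; linear_combination (-2*c₃) * hΔ2
  have hrel : 6*c₁ + 4*(c₃-8*c₁)*w₁ - 10*(c₃-4*c₁)*w₁^2 = 0 := by
    have h0 : (6*c₁ + 4*(c₃-8*c₁)*w₁ - 10*(c₃-4*c₁)*w₁^2) * D^2 = 0 := by
      linear_combination hrelD + (4*(c₃-8*c₁)*D - 10*(c₃-4*c₁)*(w₁*D + (-2*c₁+c₃+Δ))) * hw1D
    have hD2 : D^2 ≠ 0 := pow_ne_zero _ hD'
    exact (mul_eq_zero.mp h0).resolve_right hD2
  have hs1 : 1 ≤ 3 * w₁ := by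
    have h3 : D ≤ 3 * (-2 * c₁ + c₃ + Δ) := by rw [hDdef]; linarith
    rw [hw₁def, show (3:ℝ) * ((-2 * c₁ + c₃ + Δ)/D) = 3 * (-2 * c₁ + c₃ + Δ) / D by ring,
      le_div_iff₀ hD]
    linarith
  have hs2 : 5 * w₁ < 2 := by
    have h5 : 5 * (-2 * c₁ + c₃ + Δ) < 2 * D := by rw [hDdef]; linarith
    rw [hw₁def, show (5:ℝ) * ((-2 * c₁ + c₃ + Δ)/D) = 5 * (-2 * c₁ + c₃ + Δ) / D by ring,
      div_lt_iff₀ hD]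
    linarith
  have hw3eq : w₃ = 1 - 2 * w₁ := by linarith
  -- reduce to the symmetric point t = (v₁+v₂)/2
  obtain ⟨t, htdef⟩ : ∃ t : ℝ, t = (v₁ + v₂) / 2 := ⟨_, rfl⟩
  have ht0 : 0 ≤ t := by rw [htdef]; positivity
  have h2t : v₁ + v₂ = 2 * t := by rw [htdef]; ring
  have ht1 : 2 * t ≤ 1 := by linarith
  have hv3 : v₃ = 1 - 2*t := by linarith
  subst hv3
  have hp : v₁ * v₂ ≤ t^2 := by nlinarith [sq_nonneg (v₁ - v₂)]
  have hident : t^3*(1-2*t)*(2*c₁ + (c₃-4*c₁)*t)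
      - v₁ * v₂ * (1-2*t) * (c₁ * v₂ * (1-2*t) + c₁ * v₁ * (1-2*t) + c₃ * v₁ * v₂)
      = (1-2*t) * (t^2 - v₁*v₂) * (2*c₁*t*(1-2*t) + c₃*(t^2 + v₁*v₂)) := by
    linear_combination (-(c₁*(1-2*t)^2*v₁*v₂)) * h2t
  have e1 : (0:ℝ) ≤ 1 - 2*t := by linarith
  have e3 : 0 ≤ 2*c₁*t*(1-2*t) + c₃*(t^2 + v₁*v₂) :=
    add_nonneg (mul_nonneg (mul_nonneg (by linarith) ht0) e1)
      (mul_nonneg (by linarith) (add_nonneg (sq_nonneg t) (mul_nonneg hv₁ hv₂)))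
  have hprod : 0 ≤ (1-2*t) * (t^2 - v₁*v₂) * (2*c₁*t*(1-2*t) + c₃*(t^2 + v₁*v₂)) :=
    mul_nonneg (mul_nonneg e1 (by linarith)) e3
  have hstep1 : v₁ * v₂ * (1-2*t) * (c₁ * v₂ * (1-2*t) + c₁ * v₁ * (1-2*t) + c₃ * v₁ * v₂)
      ≤ t^3*(1-2*t)*(2*c₁ + (c₃-4*c₁)*t) := by linarith
  have hstep2 : t^3*(1-2*t)*(2*c₁ + (c₃-4*c₁)*t)
      ≤ w₁^3*(1-2*w₁)*(2*c₁ + (c₃-4*c₁)*w₁) :=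
    phi_max c₁ c₃ w₁ t h₁ hk hrel hs1 hs2 ht0 ht1
  have hRHS : w₁ * w₁ * w₃ * (c₁ * w₁ * w₃ + c₁ * w₁ * w₃ + c₃ * w₁ * w₁)
      = w₁^3*(1-2*w₁)*(2*c₁ + (c₃-4*c₁)*w₁) := by
    rw [hw3eq]; ring
  rw [hRHS]
  exact le_trans hstep1 hstep2
end
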